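/- Fix M > 16. For k = 1,...,8 let t(k) = 1/2 - k/M, x_k = (1/2 + k/M)/(1 - 2k/M), u(k) = 1 - x_8 + x_k, v(k) = 1 + x_1^2 - x_k^2, and define μ_M = min over all pairs j ≠ k in {1,...,8} of (1 - t(k))(u(k) - u(j)) + t(k)(v(k) - v(j)). Then μ_M > 0. -/

import Mathlib

/-!
The (j, k) term is `h(x_k) - h(x_j)` for the concave quadratic `h(x) = (1 - t(k)) x - t(k) x²`,
whose maximiser is `x_k` because `1 - t(k) = 2 t(k) x_k`; hence it equals `t(k) (x_k - x_j)²`.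
This is positive because `t(k) > 0` and `k ↦ x_k` is injective on `2k < M`.
-/

noncomputable def xk (M : ℝ) (k : ℕ) : ℝ := (1/2 + k/M) / (1 - 2*k/M)
noncomputable def tt (M : ℝ) (k : ℕ) : ℝ := 1/2 - k/M
noncomputable def uu (M : ℝ) (k : ℕ) : ℝ := (1 - xk M 8) + xk M k
noncomputable def vv (M : ℝ) (k : ℕ) : ℝ := (1 + (xk M 1)^2) - (xk M k)^2

theorem sub_mul_sub_add_mul_sq_sub_sq_of_critical {t x y : ℝ} (h : 1 - t = 2 * t * x) :
    (1 - t) * (x - y) + t * (y ^ 2 - x ^ 2) = t * (x - y) ^ 2 := by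
  rw [h]; ring

section

variable {M : ℝ} {k : ℕ}

theorem pos_of_two_mul_natCast_lt (hk : 2 * (k : ℝ) < M) : 0 < M := by
  have : (0 : ℝ) ≤ k := k.cast_nonneg
  linarith

theorem tt_pos (hk : 2 * (k : ℝ) < M) : 0 < tt M k := by
  have hM := pos_of_two_mul_natCast_lt hk
  have : (k : ℝ) / M < 1 / 2 := by rw [div_lt_iff₀ hM]; linarith
  unfold tt; linarith

theorem xk_eq (hk : 2 * (k : ℝ) < M) : xk M k = (M + 2 * k) / (2 * (M - 2 * k)) := by
  have hM := pos_of_two_mul_natCast_lt hk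
  have : M - 2 * k ≠ 0 := by linarith
  unfold xk; field_simp

theorem one_sub_tt_eq (hk : 2 * (k : ℝ) < M) : 1 - tt M k = 2 * tt M k * xk M k := by
  have hM := pos_of_two_mul_natCast_lt hk
  have : M - 2 * k ≠ 0 := by linarith
  rw [xk_eq hk]; unfold tt; field_simp; ring

theorem xk_injOn {j : ℕ} (hj : 2 * (j : ℝ) < M) (hk : 2 * (k : ℝ) < M)
    (h : xk M j = xk M k) : j = k := by
  have hM := pos_of_two_mul_natCast_lt hk
  have hMj : M - 2 * j ≠ 0 := by linarith
  have hMk : M - 2 * k ≠ 0 := by linarith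
  rw [xk_eq hj, xk_eq hk, div_eq_div_iff (by positivity) (by positivity)] at h
  have : 4 * M * ((j : ℝ) - k) = 0 := by linear_combination h / 2
  have : (j : ℝ) = k := by
    rcases mul_eq_zero.1 this with h0 | h0
    · linarith
    · linarith
  exact_mod_cast this

end

theorem muM_pos (M : ℝ) (hM : M > 16) :
    ∀ j k : ℕ, 1 ≤ j → j ≤ 8 → 1 ≤ k → k ≤ 8 → j ≠ k →
      0 < (1 - tt M k) * (uu M k - uu M j) + tt M k * (vv M k - vv M j) := by
  intro j k _ hj8 _ hk8 hjk
  have hj : 2 * (j : ℝ) < M := by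
    have : (j : ℝ) ≤ 8 := by exact_mod_cast hj8
    linarith
  have hk : 2 * (k : ℝ) < M := by
    have : (k : ℝ) ≤ 8 := by exact_mod_cast hk8
    linarith
  have hx : xk M k - xk M j ≠ 0 := sub_ne_zero.2 fun h => hjk (xk_injOn hj hk h.symm)
  have hgain : (1 - tt M k) * (uu M k - uu M j) + tt M k * (vv M k - vv M j)
      = tt M k * (xk M k - xk M j) ^ 2 := by
    rw [← sub_mul_sub_add_mul_sq_sub_sq_of_critical (one_sub_tt_eq hk)]
    unfold uu vv; ring
  rw [hgain]
  exact mul_pos (tt_pos hk) (sq_pos_of_ne_zero hx)
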